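/- arXiv:2001.07634 — 5 statements merged into one kernel-verified Lean document; each statement's English description precedes it below -/
import Mathlib

section
/- Let A be a torsion-free non-cyclic group generated by non-trivial elements a_1, a_2, a_3, a_4 satisfying a_1 = a_2 and a_1 a_2 a_3 a_4 = 1. Let m(1), m(2), m(3), m(4) be strictly positive integers with greatest common divisor 1 and with m(4) ≠ m(1) and m(1) ≠ m(2). Let G = (A * ⟨t⟩)/N(a_1 t^{m(1)} a_2 t^{m(2)} a_3 t^{m(3)} a_4 t^{m(4)}). If none of a_1, a_2, a_3, a_4 is isolated in A, then the image of t in G has infinite order. -/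
/-!
Non-isolation leaves only `a₃ = a₂` (anything else makes `A` cyclic or produces torsion), so `A`
is generated by `x = a₀`, `y = a₂` with `x²y² = 1`. Then `y` inverts `xy`, the subgroup `⟨xy⟩` is
normal, and torsion-freeness makes `A/⟨xy⟩` infinite cyclic on the image of `y`; hence for every
`β` there is a homomorphism `x ↦ β⁻¹`, `y ↦ β`. Take `β : z ↦ cz` in the affine group of `ℂ` and
`t ↦ (z ↦ z + 1)`. The relator then acts as the translation by
`m₃ + (m₀ + m₂)/c + m₁/c²`, which vanishes when `c` is a nonzero root of
`m₃X² + (m₀ + m₂)X + m₁`. So the relator dies while the image of `t` has infinite order.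
-/

open Monoid Coprod Multiplicative

def Monoid.IsTorsionFree (G : Type*) [Monoid G] : Prop :=
  ∀ g : G, g ≠ 1 → ¬IsOfFinOrder g

open Subgroup

theorem Monoid.IsTorsionFree.eq_one_of_zpow_eq_one {A : Type*} [Group A]
    (hA : IsTorsionFree A) {g : A} {n : ℤ} (hn : n ≠ 0) (h : g ^ n = 1) : g = 1 := by
  by_contra hg
  exact hA g hg (isOfFinOrder_iff_zpow_eq_one.mpr ⟨n, hn, h⟩)

theorem exists_monoidHom_of_zpowers_eq_top {Q G : Type*} [Group Q] [Group G] {g : Q}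
    (hg : zpowers g = ⊤) (hfin : ¬IsOfFinOrder g) (β : G) : ∃ f : Q →* G, f g = β := by
  have : Infinite Q :=
    Set.infinite_univ_iff.mp (by rw [← coe_top, ← hg]; exact infinite_zpowers.mpr hfin)
  refine ⟨(zpowersHom G β).comp (intEquivOfZPowersEqTop g hg).symm.toMonoidHom, ?_⟩
  simp

section InvertingConjugation

variable {A : Type*} [Group A] {p q : A}

theorem Monoid.IsTorsionFree.eq_zero_of_zpow_mem_zpowers_of_conj_eq_inv
    (hA : IsTorsionFree A) (hq : q ≠ 1) (hpq : q * p * q⁻¹ = p⁻¹) {j : ℤ}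
    (hj : q ^ j ∈ zpowers p) : j = 0 := by
  obtain ⟨i, hi⟩ := hj
  change p ^ i = q ^ j at hi
  have hinv : p ^ i = (p ^ i)⁻¹ := by
    calc p ^ i = q * p ^ i * q⁻¹ := by rw [hi]; group
      _ = (p ^ i)⁻¹ := by rw [← conj_zpow, hpq, inv_zpow]
  have hpi : p ^ i = 1 := hA.eq_one_of_zpow_eq_one two_ne_zero <| by
    rw [zpow_two]; nth_rw 2 [hinv]; exact mul_inv_cancel _
  by_contra hj
  exact hq (hA.eq_one_of_zpow_eq_one hj (hi ▸ hpi))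

theorem zpowers_normal_of_conj_eq_inv (hpq : q * p * q⁻¹ = p⁻¹)
    (hgen : closure {p, q} = ⊤) : (zpowers p).Normal := by
  rw [← normalizer_eq_top_iff, eq_top_iff, ← hgen, closure_le]
  rintro g (rfl | rfl)
  · exact le_normalizer (mem_zpowers g)
  · rw [SetLike.mem_coe, mem_normalizer_iff_map_conj_eq, MonoidHom.map_zpowers]
    exact (congrArg zpowers hpq).trans zpowers_inv

theorem Monoid.IsTorsionFree.exists_monoidHom_of_conj_eq_inv (hA : IsTorsionFree A)
    (hq : q ≠ 1) (hpq : q * p * q⁻¹ = p⁻¹) (hgen : closure {p, q} = ⊤)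
    {G : Type*} [Group G] (β : G) : ∃ f : A →* G, f p = 1 ∧ f q = β := by
  have := zpowers_normal_of_conj_eq_inv hpq hgen
  let π := QuotientGroup.mk' (zpowers p)
  have hπp : π p = 1 := (QuotientGroup.eq_one_iff p).mpr (mem_zpowers p)
  have hπq : zpowers (π q) = ⊤ := by
    rw [zpowers_eq_closure (π q), ← closure_insert_one, ← hπp, ← Set.image_pair,
      ← MonoidHom.map_closure, hgen, map_top_of_surjective π (QuotientGroup.mk'_surjective _)]
  have hfin : ¬IsOfFinOrder (π q) := by
    rw [isOfFinOrder_iff_zpow_eq_one]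
    rintro ⟨j, hj, hqj⟩
    rw [← map_zpow, QuotientGroup.mk'_apply, QuotientGroup.eq_one_iff] at hqj
    exact hj (hA.eq_zero_of_zpow_mem_zpowers_of_conj_eq_inv hq hpq hqj)
  obtain ⟨f, hf⟩ := exists_monoidHom_of_zpowers_eq_top hπq hfin β
  exact ⟨f.comp π, by rw [MonoidHom.comp_apply, hπp, map_one], hf⟩

theorem Monoid.IsTorsionFree.exists_monoidHom_of_mul_self_mul_mul_self_eq_one
    (hA : IsTorsionFree A) {x y : A} (hy : y ≠ 1) (hxy : x * x * y * y = 1)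
    (hgen : closure {x, y} = ⊤) {G : Type*} [Group G] (β : G) :
    ∃ f : A →* G, f x = β⁻¹ ∧ f y = β := by
  have hinv : y * (x * y) * y⁻¹ = (x * y)⁻¹ := by
    have hxx : x * x = (y * y)⁻¹ := eq_inv_of_mul_eq_one_left (by rw [← hxy]; group)
    rw [eq_inv_iff_mul_eq_one]
    calc y * (x * y) * y⁻¹ * (x * y) = y * (x * x) * y := by group
      _ = 1 := by rw [hxx]; group
  have hgen' : closure {x * y, y} = ⊤ := by
    rw [eq_top_iff, ← hgen, closure_le, Set.insert_subset_iff, Set.singleton_subset_iff]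
    have hx : x * y * y⁻¹ ∈ closure {x * y, y} := mul_mem (subset_closure (Set.mem_insert _ _))
      (inv_mem (subset_closure (Set.mem_insert_of_mem _ rfl)))
    exact ⟨by simpa using hx, subset_closure (Set.mem_insert_of_mem _ rfl)⟩
  obtain ⟨f, hfp, hfq⟩ := hA.exists_monoidHom_of_conj_eq_inv hy hinv hgen' β
  refine ⟨f, ?_, hfq⟩
  rw [← mul_inv_cancel_right x y, map_mul, map_inv, hfp, hfq, one_mul]

end InvertingConjugation

section FourGenerators

variable {A : Type*} [Group A] {a : Fin 4 → A}

theorem notMem_zpowers_of_not_isCyclic (hnc : ¬IsCyclic A)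
    (hgen : closure (Set.range a) = ⊤) (h01 : a 0 = a 1) (hrel : a 0 * a 1 * a 2 * a 3 = 1) :
    a 0 ∉ zpowers (a 2) := by
  intro h0
  refine hnc (isCyclic_iff_exists_zpowers_eq_top.mpr ⟨a 2, ?_⟩)
  have h3 : a 3 ∈ zpowers (a 2) := by
    rw [eq_inv_of_mul_eq_one_right hrel]
    exact inv_mem (mul_mem (mul_mem h0 (h01 ▸ h0)) (mem_zpowers _))
  rw [eq_top_iff, ← hgen, closure_le]
  rintro _ ⟨i, rfl⟩
  fin_cases i
  exacts [h0, h01 ▸ h0, mem_zpowers _, h3]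

theorem Monoid.IsTorsionFree.apply_three_eq_apply_two_of_not_isolated (hA : IsTorsionFree A)
    (ha : ∀ i, a i ≠ 1) (h01 : a 0 = a 1) (hrel : a 0 * a 1 * a 2 * a 3 = 1)
    (hx : a 0 ∉ zpowers (a 2)) (hiso : ∀ i, ∃ k, k ≠ i ∧ a k ∈ zpowers (a i)) :
    a 3 = a 2 := by
  have hmem : ∀ i k, zpowers (a i) ≤ zpowers (a 2) → a k ∈ zpowers (a i) → k = 2 ∨ k = 3 := by
    intro i k hi hk
    fin_cases k
    exacts [absurd (hi hk) hx, absurd (hi (h01 ▸ hk)) hx, .inl rfl, .inr rfl]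
  obtain ⟨k, hk2, h32⟩ := hiso 2
  obtain rfl : k = 3 := (hmem 2 k le_rfl h32).resolve_left hk2
  obtain ⟨k', hk3, h23⟩ := hiso 3
  obtain rfl : k' = 2 := (hmem 3 k' (zpowers_le.mpr h32) h23).resolve_right hk3
  obtain ⟨n, hn⟩ := h32
  obtain ⟨j, hj⟩ := h23
  change a 2 ^ n = a 3 at hn
  change a 3 ^ j = a 2 at hj
  have hnj : n * j = 1 := by
    by_contra hnj
    refine ha 2 (hA.eq_one_of_zpow_eq_one (sub_ne_zero.mpr hnj) ?_)
    rw [zpow_sub_one, zpow_mul, hn, hj, mul_inv_cancel]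
  rcases Int.eq_one_or_neg_one_of_mul_eq_one hnj with rfl | rfl
  · rw [← hn, zpow_one]
  · refine absurd (hA.eq_one_of_zpow_eq_one two_ne_zero ?_) (ha 0)
    rw [← hn, zpow_neg_one, ← h01, mul_inv_cancel_right] at hrel
    rwa [zpow_two]

end FourGenerators

theorem exists_ne_zero_quadratic_eq_zero {K : Type*} [Field K] [IsAlgClosed K] [NeZero (2 : K)]
    {a b c : K} (ha : a ≠ 0) (hc : c ≠ 0) : ∃ x ≠ 0, a * (x * x) + b * x + c = 0 := by
  obtain ⟨x, hx⟩ := exists_quadratic_eq_zero ha (IsAlgClosed.exists_eq_mul_self _)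
  refine ⟨x, ?_, hx⟩
  rintro rfl
  simp [hc] at hx

theorem mulLeft₀_addLeft_relator_eq_one {K : Type*} [Field K] {c : K} (hc : c ≠ 0)
    {m₀ m₁ m₂ m₃ : K} (h : m₃ * (c * c) + (m₀ + m₂) * c + m₁ = 0) :
    (Equiv.mulLeft₀ c hc)⁻¹ * Equiv.addLeft m₀ * (Equiv.mulLeft₀ c hc)⁻¹ * Equiv.addLeft m₁ *
      Equiv.mulLeft₀ c hc * Equiv.addLeft m₂ * Equiv.mulLeft₀ c hc * Equiv.addLeft m₃ = 1 := by
  ext z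
  simp only [Equiv.Perm.inv_def, Equiv.Perm.coe_mul, Equiv.mulLeft₀_symm_apply,
    Equiv.coe_addLeft, Equiv.mulLeft₀_apply, Function.comp_apply, Equiv.Perm.coe_one, id_eq]
  field_simp
  linear_combination h

theorem Equiv.not_isOfFinOrder_addLeft_one (R : Type*) [Ring R] [CharZero R] :
    ¬IsOfFinOrder (Equiv.addLeft (1 : R)) := by
  rw [isOfFinOrder_iff_zpow_eq_one]
  rintro ⟨n, hn, h⟩
  exact hn (by simpa [Equiv.zsmul_addLeft] using congrArg (· 0) h)

theorem not_isOfFinOrder_mk_normalClosure {P H : Type*} [Group P] [Group H] {w g : P}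
    (φ : P →* H) (hw : φ w = 1) (hg : ¬IsOfFinOrder (φ g)) :
    ¬IsOfFinOrder (QuotientGroup.mk' (normalClosure {w}) g) := fun h ↦ by
  have hker : normalClosure {w} ≤ φ.ker :=
    normalClosure_le_normal (Set.singleton_subset_iff.mpr hw)
  exact hg (by simpa using (QuotientGroup.lift _ φ hker).isOfFinOrder h)

theorem image_of_t_has_infinite_order_of_no_isolated_generator_general
    {A : Type*} [Group A] (hA : Monoid.IsTorsionFree A) (hnc : ¬ IsCyclic A)
    (a : Fin 4 → A) (ha : ∀ i, a i ≠ 1)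
    (hgen : Subgroup.closure (Set.range a) = ⊤)
    (h12 : a 0 = a 1) (hrel : a 0 * a 1 * a 2 * a 3 = 1)
    (m : Fin 4 → ℤ) (hm : ∀ i, 0 < m i)
    (hiso : ∀ i, ∃ k, k ≠ i ∧ a k ∈ Subgroup.zpowers (a i))
    (w : A ∗ Multiplicative ℤ)
    (hw : w = (List.ofFn fun i => inl (a i) * inr (ofAdd (m i))).prod) :
    ¬ IsOfFinOrder
      ((QuotientGroup.mk' (Subgroup.normalClosure {w})) (inr (ofAdd 1))) := by
  have hx := notMem_zpowers_of_not_isCyclic hnc hgen h12 hrel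
  have h32 := hA.apply_three_eq_apply_two_of_not_isolated ha h12 hrel hx hiso
  have hxy : a 0 * a 0 * a 2 * a 2 = 1 := by rwa [← h12, h32] at hrel
  have hgen' : closure {a 0, a 2} = ⊤ := by
    rw [← hgen]
    congr 1
    ext
    simp [Fin.exists_fin_succ, h12, h32, eq_comm]
  obtain ⟨c, hc, hroot⟩ := exists_ne_zero_quadratic_eq_zero (b := (m 0 + m 2 : ℂ))
    (Int.cast_ne_zero.mpr (hm 3).ne') (Int.cast_ne_zero.mpr (hm 1).ne')
  obtain ⟨f, hfx, hfy⟩ :=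
    hA.exists_monoidHom_of_mul_self_mul_mul_self_eq_one (ha 2) hxy hgen' (Equiv.mulLeft₀ c hc)
  let φ := Coprod.lift f (zpowersHom _ (Equiv.addLeft (1 : ℂ)))
  have hφt : φ (inr (ofAdd 1)) = Equiv.addLeft 1 := by simp [φ]
  refine not_isOfFinOrder_mk_normalClosure φ ?_ (hφt ▸ Equiv.not_isOfFinOrder_addLeft_one ℂ)
  simp [hw, List.ofFn_succ, φ, ← h12, h32, hfx, hfy, Equiv.zsmul_addLeft, ← mul_assoc,
    mulLeft₀_addLeft_relator_eq_one hc hroot]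

/-- **Lemma 3.1.** Let `A` be a torsion-free non-cyclic group generated by nontrivial
elements `a₁,a₂,a₃,a₄` with `a₁ = a₂` and `a₁a₂a₃a₄ = 1`; let `m(1),…,m(4)` be strictly
positive integers with gcd `1`, `m(4) ≠ m(1)` and `m(1) ≠ m(2)`, and let
`G = (A ∗ ⟨t⟩)/N(a₁t^{m(1)}a₂t^{m(2)}a₃t^{m(3)}a₄t^{m(4)})`.  If none of the `aᵢ` is
isolated (i.e. for each `i` some `a_k`, `k ≠ i`, lies in the cyclic subgroup `⟨aᵢ⟩`),
then the image of `t` in `G` has infinite order.  Here `⟨t⟩` is the infinite cyclic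
group `Multiplicative ℤ` with generator `t = ofAdd 1`. -/
theorem image_of_t_has_infinite_order_of_no_isolated_generator
    {A : Type*} [Group A] (hA : Monoid.IsTorsionFree A) (hnc : ¬ IsCyclic A)
    (a : Fin 4 → A) (ha : ∀ i, a i ≠ 1)
    (hgen : Subgroup.closure (Set.range a) = ⊤)
    (h12 : a 0 = a 1) (hrel : a 0 * a 1 * a 2 * a 3 = 1)
    (m : Fin 4 → ℤ) (hm : ∀ i, 0 < m i)
    (hgcd : Finset.univ.gcd m = 1)
    (hm41 : m 3 ≠ m 0) (hm12 : m 0 ≠ m 1)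
    (hiso : ∀ i, ∃ k, k ≠ i ∧ a k ∈ Subgroup.zpowers (a i))
    (w : A ∗ Multiplicative ℤ)
    (hw : w = (List.ofFn fun i => inl (a i) * inr (ofAdd (m i))).prod) :
    ¬ IsOfFinOrder
      ((QuotientGroup.mk' (Subgroup.normalClosure {w})) (inr (ofAdd 1))) :=
  image_of_t_has_infinite_order_of_no_isolated_generator_general hA hnc a ha hgen h12 hrel m hm hiso
    w hw
end

section
/- Let F be a field, let G be a torsion-free group, and let α = a·g + b·h be an element of the group algebra F[G], where g and h are distinct elements of G and a and b are non-zero elements of F. Then α is not a unit in F[G], and α is not a zero-divisor in F[G] (i.e. there is no non-zero β ∈ F[G] with αβ = 0). -/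
/-!
Put `x = g⁻¹ * h`, an element of infinite order. Comparing coefficients,
`(α * β) (h * z) = a * β (x * z) + b * β z`, so wherever `α * β` vanishes at `h * z`, the points
`z` and `x * z` lie both in or both outside the support of `β`. If `α * β = 0` this holds for
every `z`, and if `α * β = 1` for every `z ≠ h⁻¹`; either way a nonempty support would contain a
half of an infinite `x`-orbit.
-/

open MonoidAlgebra

section Orbit

variable {G : Type*} [Group G] {S : Set G}

lemma pow_mul_mem_of_forall_mul_mem {y c z₀ : G} (hS : ∀ z ∈ S, z ≠ z₀ → y * z ∈ S)
    (hc : c ∈ S) (hz₀ : ∀ n : ℕ, y ^ n * c ≠ z₀) (n : ℕ) : y ^ n * c ∈ S := by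
  induction n with
  | zero => simpa using hc
  | succ n ih => simpa [pow_succ', mul_assoc] using hS _ ih (hz₀ n)

lemma Set.infinite_of_forall_pow_mul_mem {y c : G} (hy : ¬IsOfFinOrder y)
    (h : ∀ n : ℕ, y ^ n * c ∈ S) : S.Infinite :=
  Set.infinite_of_injective_forall_mem
    ((mul_left_injective c).comp (injective_pow_iff_not_isOfFinOrder.mpr hy)) h

theorem Set.Finite.eq_empty_of_mem_iff_mul_mem (hS : S.Finite) {x : G} (hx : ¬IsOfFinOrder x)
    (z₀ : G) (hxS : ∀ z ≠ z₀, (z ∈ S ↔ x * z ∈ S)) : S = ∅ := by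
  refine Set.eq_empty_of_forall_notMem fun c hc => hS.not_infinite ?_
  by_cases hforward : ∀ n : ℕ, x ^ n * c ≠ z₀
  · exact Set.infinite_of_forall_pow_mul_mem hx
      (pow_mul_mem_of_forall_mul_mem (fun z hz hne => (hxS z hne).1 hz) hc hforward)
  -- `x` has infinite order, so once the forward orbit of `c` hits `z₀`, the backward one cannot
  obtain ⟨m, hm⟩ := not_forall_not.mp hforward
  refine Set.infinite_of_forall_pow_mul_mem (isOfFinOrder_inv_iff.not.mpr hx)
    (pow_mul_mem_of_forall_mul_mem (z₀ := x * z₀) (fun z hz hne => ?_) hc fun n hn => ?_)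
  · refine (hxS _ fun h => hne ?_).2 (by rwa [mul_inv_cancel_left])
    rw [← h, mul_inv_cancel_left]
  · rw [← hm, ← mul_assoc, ← pow_succ', mul_left_inj, inv_pow, ← zpow_natCast, ← zpow_natCast,
      ← zpow_neg] at hn
    have := injective_zpow_iff_not_isOfFinOrder.mpr hx hn
    omega

end Orbit

section TwoTerm

variable {k G : Type*} [Semiring k] [Group G]

lemma coeff_single_add_single_mul (g h : G) (a b : k) (β : k[G]) (z : G) :
    ((single g a + single h b) * β).coeff (h * z) = a * β.coeff (g⁻¹ * h * z) + b * β.coeff z := by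
  rw [add_mul, coeff_add, Finsupp.add_apply, coeff_single_mul_apply, coeff_single_mul_apply,
    mul_assoc, inv_mul_cancel_left]

lemma eq_zero_iff_eq_zero_of_mul_add_mul_eq_zero [NoZeroDivisors k] {a b u v : k} (ha : a ≠ 0)
    (hb : b ≠ 0) (h : a * u + b * v = 0) : u = 0 ↔ v = 0 := by
  constructor <;> rintro rfl <;> simp_all

theorem eq_zero_of_coeff_single_add_single_mul_eq_zero [NoZeroDivisors k] {g h : G}
    (hgh : ¬IsOfFinOrder (g⁻¹ * h)) {a b : k} (ha : a ≠ 0) (hb : b ≠ 0) (β : k[G]) (z₀ : G)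
    (hβ : ∀ z ≠ z₀, ((single g a + single h b) * β).coeff (h * z) = 0) : β = 0 := by
  have hsupp : (β.coeff.support : Set G) = ∅ :=
    β.coeff.support.finite_toSet.eq_empty_of_mem_iff_mul_mem hgh z₀ fun z hz => by
      have hrel := coeff_single_add_single_mul g h a b β z
      rw [hβ z hz] at hrel
      simp only [Finset.mem_coe, Finsupp.mem_support_iff, ne_eq]
      exact (eq_zero_iff_eq_zero_of_mul_add_mul_eq_zero ha hb hrel.symm).not.symm
  simpa using hsupp

end TwoTerm

/-- **Lemma 3.3.** Let `F` be a field, `G` a torsion-free group, and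
`α = a·g + b·h ∈ F[G]` with `g ≠ h` in `G` and `a, b` nonzero in `F`.  Then `α` is
neither a unit nor a zero-divisor in the group algebra `F[G]`. -/
theorem two_term_element_of_group_algebra_not_unit_nor_zero_divisor
    {F : Type*} [Field F] {G : Type*} [Group G]
    (hG : Monoid.IsTorsionFree G)
    (g h : G) (hgh : g ≠ h) (a b : F) (ha : a ≠ 0) (hb : b ≠ 0)
    (α : MonoidAlgebra F G)
    (hα : α = MonoidAlgebra.single g a + MonoidAlgebra.single h b) :
    ¬ IsUnit α ∧ ∀ β : MonoidAlgebra F G, α * β = 0 → β = 0 := by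
  have hx : ¬IsOfFinOrder (g⁻¹ * h) := hG _ (by rwa [ne_eq, inv_mul_eq_one])
  subst hα
  refine ⟨fun hu => ?_, fun β hβ => eq_zero_of_coeff_single_add_single_mul_eq_zero hx ha hb β 1
    fun z _ => by rw [hβ, coeff_zero, Finsupp.coe_zero, Pi.zero_apply]⟩
  obtain ⟨γ, hγ⟩ := hu.exists_right_inv
  have hγ0 : γ = 0 := eq_zero_of_coeff_single_add_single_mul_eq_zero hx ha hb γ h⁻¹ fun z hz => by
    rw [hγ, one_def, coeff_single]
    exact Finsupp.single_eq_of_ne fun h1 => hz (mul_eq_one_iff_inv_eq.mp h1).symm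
  simp [hγ0] at hγ
end

section
/- Let A be a group and let w = a_1 t^{m(1)} ··· a_k t^{m(k)} be a cyclically reduced element of A * ⟨t⟩ with all a_i non-trivial in A, all m(i) non-zero integers, and m(1) + ··· + m(k) = 0. For n ∈ ℤ set A_n = t^n A t^{-n} ≤ A * ⟨t⟩, so that the normal closure of A in A * ⟨t⟩ is the free product of the subgroups A_n (n ∈ ℤ), and w can be written uniquely as a word w_0 in this free product. Let μ and M denote the minimum and maximum of the partial sums m(1) + ··· + m(j) (1 ≤ j ≤ k), let H = (∗_{n=μ}^{M} A_n)/N(w_0), and let B_- and B_+ denote the images in H of ∗_{n=μ}^{M-1} A_n and ∗_{n=μ+1}^{M} A_n respectively. If the natural maps ∗_{n=μ}^{M-1} A_n → H and ∗_{n=μ+1}^{M} A_n → H are injective, then G = (A * ⟨t⟩)/N(w) is isomorphic to the HNN extension of H with stable letter t and associated subgroups B_- and B_+, where conjugation by the stable letter carries B_- to B_+ via the isomorphism induced by A_n ↦ A_{n+1} (μ ≤ n ≤ M−1). -/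
/-!
Sending `A` to `A₀` and `t` to the stable letter defines a map from `A ∗ ⟨t⟩` to the HNN
extension. Since the stable letter conjugates `A_n` onto `A_{n+1}`, one step at a time inside
the window `[μ, M]` (which contains `0`, the last partial sum), conjugation by `tⁿ` carries
`A₀` onto `A_n`; hence `w` goes to the image of `w₀`, which is trivial. Conversely
`A_n ↦ tⁿAt⁻ⁿ` maps `H` to `G`, and conjugation by `t` carries the image of `B₋` onto that of
`B₊` compatibly with the shift, so the universal property of the HNN extension gives a map
back. Both composites fix the generators.
-/

open Monoid Coprod Multiplicative

theorem MonoidHom.ofInjective_symm_trans_ofInjective_rangeRestrict {G H K : Type*} [Group G]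
    [Group H] [Group K] {f : G →* H} {g : G →* K} (hf : Function.Injective f)
    (hg : Function.Injective g) (x : G) :
    (ofInjective hf).symm.trans (ofInjective hg) (f.rangeRestrict x) = g.rangeRestrict x := by
  have hx : (ofInjective hf).symm (f.rangeRestrict x) = x :=
    (ofInjective hf).symm_apply_eq.2 (Subtype.ext (ofInjective_apply hf).symm)
  rw [MulEquiv.trans_apply, hx]
  exact Subtype.ext (ofInjective_apply hg)

theorem zpow_smul_eq_of_smul_eq_succ {G X : Type*} [Group G] [MulAction G X] {g : G}
    {f : ℤ → X} {μ M : ℤ} (hf : ∀ n, μ ≤ n → n < M → g • f n = f (n + 1))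
    (hμ : μ ≤ 0) (hM : 0 ≤ M) {n : ℤ} (hμn : μ ≤ n) (hnM : n ≤ M) : g ^ n • f 0 = f n := by
  rcases le_total 0 n with h | h
  · induction n, h using Int.leInduction with
    | base => rw [zpow_zero, one_smul]
    | succ n _ ih =>
      rw [add_comm, zpow_add, zpow_one, mul_smul, ih (by omega) (by omega),
        hf n (by omega) (by omega), add_comm]
  · induction n, h using Int.leInductionDown with
    | base => rw [zpow_zero, one_smul]
    | pred n _ ih =>
      rw [sub_eq_neg_add, zpow_add, zpow_neg_one, mul_smul, ih (by omega) (by omega),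
        inv_smul_eq_iff, hf (-1 + n) (by omega) (by omega), neg_add_cancel_comm]

namespace SingularRelator

/-- `∗_{n=μ}^{M} A_n`, the copy of `A` with index `n` standing for `A_n = tⁿAt⁻ⁿ`. -/
abbrev Window (A : Type*) [Group A] (μ M : ℤ) := CoprodI fun _ : {n : ℤ // μ ≤ n ∧ n ≤ M} => A

/-- `∗_{n=μ}^{M-1} A_n`; through `upperIncl` it also stands for `∗_{n=μ+1}^{M} A_n`. -/
abbrev LowerWindow (A : Type*) [Group A] (μ M : ℤ) :=
  CoprodI fun _ : {n : ℤ // μ ≤ n ∧ n < M} => A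

local notation "N" => Subgroup.normalClosure

variable {A : Type*} [Group A] {μ M : ℤ}

variable (A μ M) in
def toCoprod : Window A μ M →* A ∗ Multiplicative ℤ :=
  CoprodI.lift fun n => (MulAut.conj (inr (ofAdd n.1) : A ∗ Multiplicative ℤ)).toMonoidHom.comp inl

def lowerIncl (r : Window A μ M) : LowerWindow A μ M →* Window A μ M ⧸ N {r} :=
  CoprodI.lift fun n =>
    (QuotientGroup.mk' (N {r})).comp
      (CoprodI.of (M := fun _ : {n : ℤ // μ ≤ n ∧ n ≤ M} => A) (i := ⟨n.1, n.2.1, n.2.2.le⟩))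

def upperIncl (r : Window A μ M) : LowerWindow A μ M →* Window A μ M ⧸ N {r} :=
  CoprodI.lift fun n =>
    (QuotientGroup.mk' (N {r})).comp
      (CoprodI.of (M := fun _ : {n : ℤ // μ ≤ n ∧ n ≤ M} => A)
        (i := ⟨n.1 + 1, by obtain ⟨h1, h2⟩ := n.2; exact ⟨by omega, by omega⟩⟩))

/-- The element `b` of `A_n`; junk value `1` when `n` lies outside `[μ, M]`. -/
def single (μ M n : ℤ) (b : A) : Window A μ M :=
  if h : μ ≤ n ∧ n ≤ M then CoprodI.of (i := ⟨n, h⟩) b else 1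

theorem single_of_mem {n : ℤ} (h : μ ≤ n ∧ n ≤ M) (b : A) :
    single μ M n b = CoprodI.of (i := ⟨n, h⟩) b :=
  dif_pos h

theorem toCoprod_single {n : ℤ} (h : μ ≤ n ∧ n ≤ M) (b : A) :
    toCoprod A μ M (single μ M n b) = MulAut.conj (inr (ofAdd n)) (inl b) := by
  rw [single_of_mem h, toCoprod, CoprodI.lift_of]
  rfl

theorem conj_inr_one_toCoprod_single {n : ℤ} (h1 : μ ≤ n) (h2 : n < M) (b : A) :
    MulAut.conj (inr (ofAdd 1)) (toCoprod A μ M (single μ M n b)) =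
      toCoprod A μ M (single μ M (n + 1) b) := by
  rw [toCoprod_single ⟨h1, h2.le⟩, toCoprod_single ⟨by omega, by omega⟩, ← MulAut.mul_apply,
    ← map_mul, ← map_mul, ← ofAdd_add, add_comm]

theorem lowerIncl_of (r : Window A μ M) (n : {n : ℤ // μ ≤ n ∧ n < M}) (b : A) :
    lowerIncl r (CoprodI.of (i := n) b) = single μ M n b := by
  rw [lowerIncl, CoprodI.lift_of, single_of_mem]
  rfl

theorem upperIncl_of (r : Window A μ M) (n : {n : ℤ // μ ≤ n ∧ n < M}) (b : A) :
    upperIncl r (CoprodI.of (i := n) b) = single μ M (n + 1) b := by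
  rw [upperIncl, CoprodI.lift_of, single_of_mem]
  rfl

variable (r : Window A μ M)

def quotientMap : Window A μ M ⧸ N {r} →* (A ∗ Multiplicative ℤ) ⧸ N {toCoprod A μ M r} :=
  QuotientGroup.map _ _ (toCoprod A μ M) <| by
    simpa only [Set.image_singleton] using
      Subgroup.comap_normalClosure_image_ge {r} (toCoprod A μ M)

theorem quotientMap_mk (x : Window A μ M) :
    quotientMap r (x : Window A μ M ⧸ N {r}) = (toCoprod A μ M x : _ ⧸ N {toCoprod A μ M r}) :=
  QuotientGroup.map_mk _ _ _ _ x

theorem conj_quotientMap_lowerIncl (y : LowerWindow A μ M) :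
    MulAut.conj ((inr (ofAdd 1) : A ∗ Multiplicative ℤ) : _ ⧸ N {toCoprod A μ M r})
      (quotientMap r (lowerIncl r y)) = quotientMap r (upperIncl r y) := by
  suffices ((MulAut.conj _).toMonoidHom.comp ((quotientMap r).comp (lowerIncl r))) =
      (quotientMap r).comp (upperIncl r) from DFunLike.congr_fun this y
  refine CoprodI.ext_hom _ _ fun n => MonoidHom.ext fun b => ?_
  simp only [MonoidHom.comp_apply, MulEquiv.coe_toMonoidHom, lowerIncl_of, upperIncl_of,
    quotientMap_mk]
  rw [← conj_inr_one_toCoprod_single n.2.1 n.2.2]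
  rfl

section HNN

variable {r} {φ : (lowerIncl r).range ≃* (upperIncl r).range}

variable (φ) in
def IsShift : Prop :=
  ∀ y, φ ((lowerIncl r).rangeRestrict y) = (upperIncl r).rangeRestrict y

theorem conj_t_of_single (hφ : IsShift φ) {n : ℤ} (h1 : μ ≤ n) (h2 : n < M) (b : A) :
    MulAut.conj HNNExtension.t (HNNExtension.of (φ := φ) (single μ M n b)) =
      HNNExtension.of (φ := φ) (single μ M (n + 1) b) := by
  have := HNNExtension.t_mul_of (φ := φ)
    ((lowerIncl r).rangeRestrict (CoprodI.of (i := ⟨n, h1, h2⟩) b))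
  rw [hφ, MonoidHom.coe_rangeRestrict, MonoidHom.coe_rangeRestrict, lowerIncl_of,
    upperIncl_of] at this
  rw [MulAut.conj_apply, this, mul_inv_cancel_right]

theorem conj_t_zpow_of_single (hφ : IsShift φ) (hμ : μ ≤ 0) (hM : 0 ≤ M) {n : ℤ}
    (h : μ ≤ n ∧ n ≤ M) (b : A) :
    MulAut.conj (HNNExtension.t ^ n) (HNNExtension.of (φ := φ) (single μ M 0 b)) =
      HNNExtension.of (φ := φ) (single μ M n b) := by
  rw [map_zpow, ← MulAut.smul_def]
  exact zpow_smul_eq_of_smul_eq_succ (f := fun n => HNNExtension.of (φ := φ) (single μ M n b))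
    (fun n h1 h2 => conj_t_of_single hφ h1 h2 b) hμ hM h.1 h.2

variable (φ) in
def toHNN (hμ : μ ≤ 0) (hM : 0 ≤ M) :
    A ∗ Multiplicative ℤ →* HNNExtension (Window A μ M ⧸ N {r}) _ _ φ :=
  Coprod.lift (HNNExtension.of.comp ((QuotientGroup.mk' _).comp
    (CoprodI.of (M := fun _ : {n : ℤ // μ ≤ n ∧ n ≤ M} => A) (i := ⟨0, hμ, hM⟩))))
    (zpowersHom _ HNNExtension.t)

theorem toHNN_inl (hμ : μ ≤ 0) (hM : 0 ≤ M) (b : A) :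
    toHNN φ hμ hM (inl b) = HNNExtension.of (single μ M 0 b : Window A μ M ⧸ N {r}) := by
  rw [toHNN, lift_apply_inl, single_of_mem ⟨hμ, hM⟩]
  rfl

theorem toHNN_inr (hμ : μ ≤ 0) (hM : 0 ≤ M) (n : ℤ) :
    toHNN φ hμ hM (inr (ofAdd n)) = HNNExtension.t ^ n := by
  rw [toHNN, lift_apply_inr, zpowersHom_apply, toAdd_ofAdd]

theorem toHNN_toCoprod (hφ : IsShift φ) (hμ : μ ≤ 0) (hM : 0 ≤ M) (x : Window A μ M) :
    toHNN φ hμ hM (toCoprod A μ M x) = HNNExtension.of (x : Window A μ M ⧸ N {r}) := by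
  suffices (toHNN φ hμ hM).comp (toCoprod A μ M) = HNNExtension.of.comp (QuotientGroup.mk' _) from
    DFunLike.congr_fun this x
  refine CoprodI.ext_hom _ _ fun n => MonoidHom.ext fun b => ?_
  simp only [MonoidHom.comp_apply, QuotientGroup.mk'_apply]
  rw [← single_of_mem n.2, ← conj_t_zpow_of_single hφ hμ hM n.2, toCoprod_single n.2,
    MulAut.conj_apply, MulAut.conj_apply, map_mul, map_mul, map_inv, toHNN_inl, toHNN_inr]

variable (φ) in
def quotientToHNN (hφ : IsShift φ) (hμ : μ ≤ 0) (hM : 0 ≤ M) :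
    (A ∗ Multiplicative ℤ) ⧸ N {toCoprod A μ M r} →* HNNExtension (Window A μ M ⧸ N {r}) _ _ φ :=
  QuotientGroup.lift _ (toHNN φ hμ hM) <| Subgroup.normalClosure_le_normal <| by
    have hr : (r : Window A μ M ⧸ N {r}) = 1 :=
      (QuotientGroup.eq_one_iff r).2 (Subgroup.subset_normalClosure rfl)
    rw [Set.singleton_subset_iff, SetLike.mem_coe, MonoidHom.mem_ker, toHNN_toCoprod hφ, hr,
      map_one]

theorem quotientToHNN_mk (hφ : IsShift φ) (hμ : μ ≤ 0) (hM : 0 ≤ M) (x : A ∗ Multiplicative ℤ) :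
    quotientToHNN φ hφ hμ hM x = toHNN φ hμ hM x :=
  QuotientGroup.lift_mk ..

variable (φ) in
def hnnToQuotient (hφ : IsShift φ) :
    HNNExtension (Window A μ M ⧸ N {r}) _ _ φ →* (A ∗ Multiplicative ℤ) ⧸ N {toCoprod A μ M r} :=
  HNNExtension.lift (quotientMap r) (inr (ofAdd 1) : A ∗ Multiplicative ℤ) <| by
    rintro ⟨_, y, rfl⟩
    change _ = quotientMap r (φ ((lowerIncl r).rangeRestrict y)) * _
    rw [hφ, MonoidHom.coe_rangeRestrict, ← conj_quotientMap_lowerIncl, MulAut.conj_apply,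
      inv_mul_cancel_right]

theorem hnnToQuotient_of (hφ : IsShift φ) (x : Window A μ M ⧸ N {r}) :
    hnnToQuotient φ hφ (HNNExtension.of x) = quotientMap r x :=
  HNNExtension.lift_of ..

theorem hnnToQuotient_t (hφ : IsShift φ) :
    hnnToQuotient φ hφ HNNExtension.t = (inr (ofAdd 1) : A ∗ Multiplicative ℤ) :=
  HNNExtension.lift_t ..

theorem hnnToQuotient_comp_quotientToHNN (hφ : IsShift φ) (hμ : μ ≤ 0) (hM : 0 ≤ M) :
    (hnnToQuotient φ hφ).comp (quotientToHNN φ hφ hμ hM) = MonoidHom.id _ := by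
  refine QuotientGroup.monoidHom_ext _ (Coprod.hom_ext (MonoidHom.ext fun b => ?_)
    (MonoidHom.ext_mint ?_))
  · simp only [MonoidHom.comp_apply, QuotientGroup.mk'_apply, MonoidHom.id_apply]
    rw [quotientToHNN_mk, toHNN_inl, hnnToQuotient_of, quotientMap_mk, toCoprod_single ⟨hμ, hM⟩,
      ofAdd_zero, map_one, map_one, MulAut.one_apply]
  · simp only [MonoidHom.comp_apply, QuotientGroup.mk'_apply, MonoidHom.id_apply]
    rw [quotientToHNN_mk, toHNN_inr, zpow_one, hnnToQuotient_t]

theorem quotientToHNN_comp_hnnToQuotient (hφ : IsShift φ) (hμ : μ ≤ 0) (hM : 0 ≤ M) :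
    (quotientToHNN φ hφ hμ hM).comp (hnnToQuotient φ hφ) = MonoidHom.id _ := by
  refine HNNExtension.hom_ext (QuotientGroup.monoidHom_ext _ (MonoidHom.ext fun x => ?_)) ?_
  · simp only [MonoidHom.comp_apply, QuotientGroup.mk'_apply, MonoidHom.id_apply]
    rw [hnnToQuotient_of, quotientMap_mk, quotientToHNN_mk, toHNN_toCoprod hφ]
  · rw [MonoidHom.comp_apply, hnnToQuotient_t, quotientToHNN_mk, toHNN_inr, zpow_one,
      MonoidHom.id_apply]

variable (φ) in
def quotientEquivHNN (hφ : IsShift φ) (hμ : μ ≤ 0) (hM : 0 ≤ M) :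
    (A ∗ Multiplicative ℤ) ⧸ N {toCoprod A μ M r} ≃* HNNExtension (Window A μ M ⧸ N {r}) _ _ φ :=
  MonoidHom.toMulEquiv (quotientToHNN φ hφ hμ hM) (hnnToQuotient φ hφ)
    (hnnToQuotient_comp_quotientToHNN hφ hμ hM) (quotientToHNN_comp_hnnToQuotient hφ hμ hM)

theorem quotientEquivHNN_mk_inr_one (hφ : IsShift φ) (hμ : μ ≤ 0) (hM : 0 ≤ M) :
    quotientEquivHNN φ hφ hμ hM (inr (ofAdd 1) : A ∗ Multiplicative ℤ) = HNNExtension.t := by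
  rw [quotientEquivHNN, MonoidHom.toMulEquiv_apply, quotientToHNN_mk, toHNN_inr, zpow_one]

theorem quotientEquivHNN_mk_toCoprod (hφ : IsShift φ) (hμ : μ ≤ 0) (hM : 0 ≤ M)
    (x : Window A μ M) :
    quotientEquivHNN φ hφ hμ hM (toCoprod A μ M x) =
      HNNExtension.of (x : Window A μ M ⧸ N {r}) := by
  rw [quotientEquivHNN, MonoidHom.toMulEquiv_apply, quotientToHNN_mk, toHNN_toCoprod hφ]

end HNN

end SingularRelator

theorem quotient_is_hnn_extension_of_singular_relator
    {A : Type*} [Group A]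
    (k : ℕ) (hk1 : 1 ≤ k)
    (m : Fin k → ℤ) (hsum : ∑ i, m i = 0)
    (w : A ∗ Multiplicative ℤ)
    (s : Fin k → ℤ) (hs : ∀ j, s j = ∑ i ∈ Finset.Iic j, m i)
    (μ M : ℤ) (hμ : ∀ j, μ ≤ s j)
    (hM : ∀ j, s j ≤ M)
    -- the embedding of the free product `∗_{n=μ}^{M} A_n` into `A ∗ ⟨t⟩`,
    -- sending the copy of `A` with index `n` to `A_n = tⁿAt⁻ⁿ`
    (ψ : CoprodI (fun _ : {n : ℤ // μ ≤ n ∧ n ≤ M} => A) →* A ∗ Multiplicative ℤ)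
    (hψ : ψ = CoprodI.lift fun n =>
      ((MulAut.conj (inr (ofAdd n.1) : A ∗ Multiplicative ℤ)).toMonoidHom.comp inl))
    -- `w` written as a word `w₀` in the free product of the `A_n`
    (w₀ : CoprodI (fun _ : {n : ℤ // μ ≤ n ∧ n ≤ M} => A))
    (hw₀ : ψ w₀ = w)
    -- the natural map `∗_{n=μ}^{M-1} A_n → H = (∗_{n=μ}^{M} A_n)/N(w₀)`
    (jminus : CoprodI (fun _ : {n : ℤ // μ ≤ n ∧ n < M} => A) →*
      CoprodI (fun _ : {n : ℤ // μ ≤ n ∧ n ≤ M} => A) ⧸ Subgroup.normalClosure {w₀})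
    (hjminus : jminus = CoprodI.lift fun n =>
      (QuotientGroup.mk' (Subgroup.normalClosure {w₀})).comp
        (CoprodI.of (M := fun _ : {n : ℤ // μ ≤ n ∧ n ≤ M} => A)
          (i := ⟨n.1, n.2.1, n.2.2.le⟩)))
    -- the natural map `∗_{n=μ+1}^{M} A_n → H`, indexed here by the predecessor `n`
    (jplus : CoprodI (fun _ : {n : ℤ // μ ≤ n ∧ n < M} => A) →*
      CoprodI (fun _ : {n : ℤ // μ ≤ n ∧ n ≤ M} => A) ⧸ Subgroup.normalClosure {w₀})
    (hjplus : jplus = CoprodI.lift fun n =>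
      (QuotientGroup.mk' (Subgroup.normalClosure {w₀})).comp
        (CoprodI.of (M := fun _ : {n : ℤ // μ ≤ n ∧ n ≤ M} => A)
          (i := ⟨n.1 + 1, by obtain ⟨h1, h2⟩ := n.2; exact ⟨by omega, by omega⟩⟩)))
    (hinjm : Function.Injective jminus) (hinjp : Function.Injective jplus) :
    -- conclusion: `G ≅` the HNN extension of `H` with associated subgroups
    -- `B₋ = range jminus`, `B₊ = range jplus` and the shift isomorphism
    -- `A_n ↦ A_{n+1}`; the isomorphism carries the image of `t` to the stable
    -- letter and is compatible with the natural maps from the `A_n`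
    ∃ e : ((A ∗ Multiplicative ℤ) ⧸ Subgroup.normalClosure {w}) ≃*
        HNNExtension
          (CoprodI (fun _ : {n : ℤ // μ ≤ n ∧ n ≤ M} => A) ⧸ Subgroup.normalClosure {w₀})
          jminus.range jplus.range
          ((MonoidHom.ofInjective hinjm).symm.trans (MonoidHom.ofInjective hinjp)),
      e ((QuotientGroup.mk' (Subgroup.normalClosure {w})) (inr (ofAdd 1))) =
        HNNExtension.t ∧
      ∀ x, e ((QuotientGroup.mk' (Subgroup.normalClosure {w})) (ψ x)) =
        HNNExtension.of ((QuotientGroup.mk' (Subgroup.normalClosure {w₀})) x) := by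
  obtain ⟨hμ₀, hM₀⟩ : μ ≤ 0 ∧ 0 ≤ M := by
    obtain ⟨n, rfl⟩ : ∃ n, k = n + 1 := ⟨k - 1, by omega⟩
    have hlast : s (Fin.last n) = 0 := by rw [hs, ← Fin.top_eq_last, Finset.Iic_top, hsum]
    exact ⟨hlast ▸ hμ _, hlast ▸ hM _⟩
  subst hw₀ hψ hjminus hjplus
  have hφ : SingularRelator.IsShift
      ((MonoidHom.ofInjective hinjm).symm.trans (MonoidHom.ofInjective hinjp)) :=
    MonoidHom.ofInjective_symm_trans_ofInjective_rangeRestrict hinjm hinjp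
  exact ⟨SingularRelator.quotientEquivHNN _ hφ hμ₀ hM₀,
    SingularRelator.quotientEquivHNN_mk_inr_one hφ hμ₀ hM₀,
    SingularRelator.quotientEquivHNN_mk_toCoprod hφ hμ₀ hM₀⟩
end

section
/- Let A be a group generated by elements a_1, a_2, a_3, a_4 satisfying a_1 = a_3, a_1 a_2 a_3 a_4 = 1, and a_4 (a_2^{-1} a_4)^m = 1 for some integer m ≥ 1. Then A is cyclic; indeed A is generated by a_3 a_4. -/
/-! Put `g = a₃a₄`. Since `a₁ = a₃`, the first relation gives `a₂⁻¹ = a₁a₄a₁`, hence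
`a₂⁻¹a₄ = g²`. The second relation then reads `a₄g^{2m} = 1`, so `a₄ = g^{-2m}`, and
`a₁ = g a₄⁻¹`, `a₂ = (a₁a₄a₁)⁻¹` are powers of `g` as well. -/

namespace Group

variable {G : Type*} [Group G]

theorem eq_inv_of_mul_mul_mul_eq_one {a b c : G} (h : a * b * a * c = 1) :
    b = (a * c * a)⁻¹ := by
  refine eq_inv_of_mul_eq_one_left ?_
  calc b * (a * c * a) = a⁻¹ * (a * b * a * c) * a := by group
    _ = 1 := by rw [h, mul_one, inv_mul_cancel]

theorem inv_mul_eq_sq_of_mul_mul_mul_eq_one {a b c : G} (h : a * b * a * c = 1) :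
    b⁻¹ * c = (a * c) ^ 2 := by
  rw [eq_inv_of_mul_mul_mul_eq_one h, inv_inv, sq]
  group

theorem mem_zpowers_of_relations {a b c : G} (h : a * b * a * c = 1) (m : ℤ)
    (h' : c * (b⁻¹ * c) ^ m = 1) :
    a ∈ Subgroup.zpowers (a * c) ∧ b ∈ Subgroup.zpowers (a * c) ∧
      c ∈ Subgroup.zpowers (a * c) := by
  have hc : c ∈ Subgroup.zpowers (a * c) := by
    have := inv_mem (zpow_mem (pow_mem (Subgroup.mem_zpowers (a * c)) 2) m)
    rwa [← inv_mul_eq_sq_of_mul_mul_mul_eq_one h, ← eq_inv_of_mul_eq_one_left h'] at this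
  have ha : a ∈ Subgroup.zpowers (a * c) := by
    simpa using mul_mem (Subgroup.mem_zpowers (a * c)) (inv_mem hc)
  have hb : b ∈ Subgroup.zpowers (a * c) := by
    rw [eq_inv_of_mul_mul_mul_eq_one h]
    exact inv_mem (mul_mem (mul_mem ha hc) ha)
  exact ⟨ha, hb, hc⟩

end Group

theorem cyclic_of_relations_case_iv_general
    {A : Type*} [Group A] (a₁ a₂ a₃ a₄ : A)
    (hgen : Subgroup.closure ({a₁, a₂, a₃, a₄} : Set A) = ⊤)
    (h13 : a₁ = a₃) (hrel : a₁ * a₂ * a₃ * a₄ = 1)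
    (m : ℤ) (hrel' : a₄ * (a₂⁻¹ * a₄) ^ m = 1) :
    Subgroup.zpowers (a₃ * a₄) = ⊤ ∧ IsCyclic A := by
  subst h13
  obtain ⟨h₁, h₂, h₄⟩ := Group.mem_zpowers_of_relations hrel m hrel'
  have htop : Subgroup.zpowers (a₁ * a₄) = ⊤ := by
    rw [eq_top_iff, ← hgen, Subgroup.closure_le]
    simp [Set.insert_subset_iff, h₁, h₂, h₄]
  exact ⟨htop, isCyclic_iff_exists_zpowers_eq_top.mpr ⟨_, htop⟩⟩

/-- If a group `A` is generated by elements `a₁, a₂, a₃, a₄` with `a₁ = a₃`,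
`a₁a₂a₃a₄ = 1` and `a₄(a₂⁻¹a₄)^m = 1` for some integer `m ≥ 1`, then `A` is cyclic,
generated by `a₃a₄`. -/
theorem cyclic_of_relations_case_iv
    {A : Type*} [Group A] (a₁ a₂ a₃ a₄ : A)
    (hgen : Subgroup.closure ({a₁, a₂, a₃, a₄} : Set A) = ⊤)
    (h13 : a₁ = a₃) (hrel : a₁ * a₂ * a₃ * a₄ = 1)
    (m : ℤ) (hm : 1 ≤ m) (hrel' : a₄ * (a₂⁻¹ * a₄) ^ m = 1) :
    Subgroup.zpowers (a₃ * a₄) = ⊤ ∧ IsCyclic A :=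
  cyclic_of_relations_case_iv_general a₁ a₂ a₃ a₄ hgen h13 hrel m hrel'
end

section
/- Let m_1, m_2, m_3, m_4 be strictly positive integers with greatest common divisor 1, such that for each index i there exists an index k ≠ i with m_i dividing m_k. Then one of the following holds: (a) the multiset {m_1, m_2, m_3, m_4} consists of two equal pairs (i.e. there is a partition of the indices into two pairs on each of which the values agree); or (b) three of the m_i are equal and the fourth equals 1; or (c) two of the m_i are equal, and each of the other two divides that common value, and those other two are coprime to one another. -/
/-!
Pick an index whose value `M` is maximal for divisibility; the value it divides at another
index then equals `M`, and a permutation moves these two indices to `0` and `1`. Each of the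
two remaining values divides `M` or the other remaining value, so if they differ, both divide
`M`. Then their gcd divides all four values, hence is `1`.
-/

/-- A value maximal for divisibility: `0` if it occurs, otherwise the largest value. -/
theorem Nat.exists_forall_dvd_imp_eq {ι : Type*} [Finite ι] [Nonempty ι] (f : ι → ℕ) :
    ∃ i, ∀ j, f i ∣ f j → f j = f i := by
  by_cases hzero : ∃ i, f i = 0
  · obtain ⟨i, hi⟩ := hzero
    exact ⟨i, fun j hij => by rw [hi] at hij ⊢; exact Nat.eq_zero_of_zero_dvd hij⟩
  · obtain ⟨i, hmax⟩ := Finite.exists_max f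
    refine ⟨i, fun j hij => le_antisymm (hmax j) (Nat.le_of_dvd ?_ hij)⟩
    exact Nat.pos_of_ne_zero fun hj => hzero ⟨j, hj⟩

theorem Equiv.Perm.exists_apply_eq_and_apply_eq {α : Type*} [DecidableEq α] {a b : α}
    (hab : a ≠ b) {i k : α} (hik : i ≠ k) : ∃ σ : Equiv.Perm α, σ a = i ∧ σ b = k := by
  set τ := Equiv.swap a i
  have hτk : τ k ≠ a := fun h => hik (τ.injective (h.trans (Equiv.swap_apply_right a i).symm)).symm
  refine ⟨τ * Equiv.swap b (τ k), ?_, ?_⟩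
  · simp [Equiv.swap_apply_of_ne_of_ne hab hτk.symm, τ]
  · simp [τ]

def EachDividesAnother {ι : Type*} (m : ι → ℕ) : Prop :=
  ∀ i, ∃ k, k ≠ i ∧ m i ∣ m k

theorem EachDividesAnother.comp_perm {ι : Type*} {m : ι → ℕ} (h : EachDividesAnother m)
    (σ : Equiv.Perm ι) : EachDividesAnother (m ∘ σ) := fun i => by
  obtain ⟨k, hki, hdvd⟩ := h (σ i)
  exact ⟨σ.symm k, by rwa [ne_eq, Equiv.symm_apply_eq], by simpa using hdvd⟩

theorem Finset.gcd_univ_comp_perm {ι α : Type*} [Fintype ι] [DecidableEq ι]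
    [CommMonoidWithZero α] [NormalizedGCDMonoid α] (m : ι → α) (σ : Equiv.Perm ι) :
    Finset.univ.gcd (m ∘ σ) = Finset.univ.gcd m := by
  rw [← Finset.gcd_image, Finset.image_univ_equiv]

theorem dvd_and_dvd_of_dvd_or_dvd {a b c : ℕ} (hab : a ≠ b) (ha : a ∣ c ∨ a ∣ b)
    (hb : b ∣ c ∨ b ∣ a) : a ∣ c ∧ b ∣ c := by
  rcases ha with ha | ha <;> rcases hb with hb | hb
  · exact ⟨ha, hb⟩
  · exact ⟨ha, hb.trans ha⟩
  · exact ⟨ha.trans hb, hb⟩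
  · exact absurd (Nat.dvd_antisymm ha hb) hab

theorem dvd_and_coprime_of_apply_zero_eq_apply_one (n : Fin 4 → ℕ) (h01 : n 0 = n 1)
    (h23 : n 2 ≠ n 3) (hgcd : Finset.univ.gcd n = 1) (hdvd : EachDividesAnother n) :
    n 2 ∣ n 0 ∧ n 3 ∣ n 0 ∧ Nat.Coprime (n 2) (n 3) := by
  have h2 : n 2 ∣ n 0 ∨ n 2 ∣ n 3 := by
    obtain ⟨k, hk, h⟩ := hdvd 2
    fin_cases k <;> simp_all
  have h3 : n 3 ∣ n 0 ∨ n 3 ∣ n 2 := by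
    obtain ⟨k, hk, h⟩ := hdvd 3
    fin_cases k <;> simp_all
  obtain ⟨h20, h30⟩ := dvd_and_dvd_of_dvd_or_dvd h23 h2 h3
  refine ⟨h20, h30, Nat.dvd_one.mp (hgcd ▸ Finset.dvd_gcd fun i _ => ?_)⟩
  fin_cases i
  · exact (Nat.gcd_dvd_left _ _).trans h20
  · exact (Nat.gcd_dvd_left _ _).trans (h01 ▸ h20)
  · exact Nat.gcd_dvd_left _ _
  · exact Nat.gcd_dvd_right _ _

theorem divisibility_structure_of_four_positive_integers_general
    (m : Fin 4 → ℕ)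
    (hgcd : Finset.univ.gcd m = 1)
    (hdvd : ∀ i, ∃ k, k ≠ i ∧ m i ∣ m k) :
    (∃ σ : Equiv.Perm (Fin 4), m (σ 0) = m (σ 1) ∧ m (σ 2) = m (σ 3)) ∨
    (∃ σ : Equiv.Perm (Fin 4),
      m (σ 0) = m (σ 1) ∧ m (σ 1) = m (σ 2) ∧ m (σ 3) = 1) ∨
    (∃ σ : Equiv.Perm (Fin 4), m (σ 0) = m (σ 1) ∧
      m (σ 2) ∣ m (σ 0) ∧ m (σ 3) ∣ m (σ 0) ∧
      Nat.Coprime (m (σ 2)) (m (σ 3))) := by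
  obtain ⟨i, hi⟩ := Nat.exists_forall_dvd_imp_eq m
  obtain ⟨k, hki, hik⟩ := hdvd i
  obtain ⟨σ, hσ0, hσ1⟩ :=
    Equiv.Perm.exists_apply_eq_and_apply_eq (a := (0 : Fin 4)) (b := 1) (by decide) hki.symm
  have h01 : m (σ 0) = m (σ 1) := by rw [hσ0, hσ1, hi k hik]
  rcases eq_or_ne (m (σ 2)) (m (σ 3)) with h23 | h23
  · exact Or.inl ⟨σ, h01, h23⟩
  · refine Or.inr (Or.inr ⟨σ, h01, dvd_and_coprime_of_apply_zero_eq_apply_one (m ∘ σ) h01 h23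
      (by rwa [Finset.gcd_univ_comp_perm]) (EachDividesAnother.comp_perm hdvd σ)⟩)

/-- Let `m₁, m₂, m₃, m₄` be strictly positive integers with greatest common divisor
`1`, such that each `mᵢ` divides some `m_k` with `k ≠ i`.  Then one of the following
holds: (a) the values consist of two equal pairs; (b) three of the values are equal
and the fourth equals `1`; or (c) two of the values are equal, each of the other two
divides that common value, and the other two are coprime to one another. -/
theorem divisibility_structure_of_four_positive_integers
    (m : Fin 4 → ℕ) (hm : ∀ i, 0 < m i)
    (hgcd : Finset.univ.gcd m = 1)
    (hdvd : ∀ i, ∃ k, k ≠ i ∧ m i ∣ m k) :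
    (∃ σ : Equiv.Perm (Fin 4), m (σ 0) = m (σ 1) ∧ m (σ 2) = m (σ 3)) ∨
    (∃ σ : Equiv.Perm (Fin 4),
      m (σ 0) = m (σ 1) ∧ m (σ 1) = m (σ 2) ∧ m (σ 3) = 1) ∨
    (∃ σ : Equiv.Perm (Fin 4), m (σ 0) = m (σ 1) ∧
      m (σ 2) ∣ m (σ 0) ∧ m (σ 3) ∣ m (σ 0) ∧
      Nat.Coprime (m (σ 2)) (m (σ 3))) :=
  divisibility_structure_of_four_positive_integers_general m hgcd hdvd
end
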